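/- arXiv:2112.01773 — 2 statements merged into one kernel-verified Lean document; each statement's English description precedes it below -/
import Mathlib

section
/- Let ξ : ℝ → ℝ be continuous with ξ(x) ≥ a for all x ∈ ℝ, for some constant a > 0, and let κ > 0 be a constant. Suppose ε : ℝ → ℝ is differentiable on [0,∞) and satisfies ε'(t) = -ξ(ε(t))·ε(t) - κ·∫₀ᵗ ε(s) ds for all t ≥ 0. Then ε(t) tends to 0 as t → ∞. -/
/-!
Along a solution, `V = ε² + κ (∫₀ᵗ ε)² + 2a ∫₀ᵗ ε²` has derivative `2 (a - ξ(ε)) ε² ≤ 0`, so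
`V(t) ≤ ε(0)²`. This bounds `ε` and `∫₀ᵗ ε`, hence (`ξ` being bounded on compact sets) `ε'`,
so `ε` is Lipschitz on `[0, ∞)`; it also bounds `∫₀ᵗ ε²`, so `ε²` is integrable on `(0, ∞)`.
Barbalat's lemma, that a Lipschitz function with integrable square tends to `0`, concludes.
-/

open MeasureTheory intervalIntegral Filter Set Topology NNReal

section IntervalIntegral

variable {E : Type*} [NormedAddCommGroup E] {μ : Measure ℝ}

theorem MeasureTheory.IntegrableOn.intervalIntegrable_of_Ioi {g : ℝ → E} {t₀ b c : ℝ}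
    (hg : IntegrableOn g (Ioi t₀) μ) (hb : t₀ ≤ b) (hc : b ≤ c) : IntervalIntegrable g μ b c :=
  (intervalIntegrable_iff_integrableOn_Ioc_of_le hc).2
    (hg.mono_set fun _ hs => lt_of_le_of_lt hb hs.1)

variable [NormedSpace ℝ E]

theorem tendsto_intervalIntegral_self_add_atTop_zero {g : ℝ → E} {t₀ : ℝ}
    (hg : IntegrableOn g (Ioi t₀) μ) (h : ℝ) :
    Tendsto (fun t => ∫ s in t..t + h, g s ∂μ) atTop (𝓝 0) := by
  have hlim := (intervalIntegral_tendsto_integral_Ioi t₀ hg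
    (tendsto_atTop_add_const_right _ h tendsto_id)).sub
    (intervalIntegral_tendsto_integral_Ioi t₀ hg tendsto_id)
  rw [sub_self] at hlim
  refine hlim.congr' ?_
  filter_upwards [eventually_ge_atTop t₀, eventually_ge_atTop (t₀ - h)] with t ht hth
  exact integral_interval_sub_left (hg.intervalIntegrable_of_Ioi le_rfl (by simp; linarith))
    (hg.intervalIntegrable_of_Ioi le_rfl ht)

theorem hasDerivWithinAt_integral_Ici [CompleteSpace E] {f : ℝ → E} {t₀ t : ℝ}
    (hf : ContinuousOn f (Ici t₀)) (ht : t₀ ≤ t) :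
    HasDerivWithinAt (fun u => ∫ s in t₀..u, f s) (f t) (Ici t₀) t := by
  have hint : IntervalIntegrable f volume t₀ t :=
    (hf.mono (uIcc_of_le ht ▸ Icc_subset_Ici_self)).intervalIntegrable
  have hmeas : StronglyMeasurableAtFilter f (𝓝[Ici t₀] t) :=
    ⟨Ici t₀, self_mem_nhdsWithin, hf.aestronglyMeasurable measurableSet_Ici⟩
  rcases ht.eq_or_lt with rfl | ht
  · exact integral_hasDerivWithinAt_right hint
      (hmeas.filter_mono (nhdsWithin_mono _ Ioi_subset_Ici_self))
      ((hf _ self_mem_Ici).mono Ioi_subset_Ici_self)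
  · have hnhds : Ici t₀ ∈ 𝓝 t := Ici_mem_nhds ht
    rw [nhdsWithin_eq_nhds.2 hnhds] at hmeas
    exact (integral_hasDerivAt_right hint hmeas (hf.continuousAt hnhds)).hasDerivWithinAt

end IntervalIntegral

theorem tendsto_atTop_zero_of_lipschitzOnWith_of_integrableOn_sq {f : ℝ → ℝ} {K : ℝ≥0} {t₀ : ℝ}
    (hf : LipschitzOnWith K f (Ici t₀)) (hf2 : IntegrableOn (fun t => f t ^ 2) (Ioi t₀)) :
    Tendsto f atTop (𝓝 0) := by
  rw [Metric.tendsto_atTop]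
  intro c hc
  set h := c / (2 * (K + 1)) with h_def
  have hh : 0 < h := by positivity
  have hKh : K * h ≤ c / 2 := by
    rw [h_def, mul_div_assoc', div_le_div_iff₀ (by positivity) two_pos]
    nlinarith
  obtain ⟨N, hN⟩ := ((tendsto_intervalIntegral_self_add_atTop_zero hf2 h).eventually
    (gt_mem_nhds (show 0 < (c / 2) ^ 2 * h by positivity))).and (eventually_ge_atTop t₀)
    |>.exists_forall_of_atTop
  refine ⟨N, fun t ht => ?_⟩
  obtain ⟨hsmall, ht₀⟩ := hN t ht
  rw [Real.dist_eq, sub_zero]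
  by_contra! hbig
  -- `|f t| ≥ c` and the Lipschitz bound keep `f²` above `(c/2)²` on `[t, t + h]`.
  have hwindow : ∀ s ∈ Icc t (t + h), (c / 2) ^ 2 ≤ f s ^ 2 := by
    intro s hs
    have hdist : |f s - f t| ≤ K * |s - t| :=
      hf.dist_le_mul s (le_trans ht₀ hs.1) t ht₀
    have hst : |s - t| ≤ h := by rw [abs_of_nonneg (by linarith [hs.1])]; linarith [hs.2]
    have hfs : c / 2 ≤ |f s| := by
      have := abs_sub_abs_le_abs_sub (f t) (f s)
      rw [abs_sub_comm] at this
      nlinarith [K.2]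
    nlinarith [sq_abs (f s)]
  have hlarge := integral_mono_on (by linarith) intervalIntegrable_const
    (hf2.intervalIntegrable_of_Ioi ht₀ (by linarith)) hwindow
  rw [intervalIntegral.integral_const, smul_eq_mul, add_sub_cancel_left] at hlarge
  linarith

def SolvesAZTND (ξ : ℝ → ℝ) (κ : ℝ) (ε : ℝ → ℝ) : Prop :=
  ∀ t : ℝ, 0 ≤ t → HasDerivAt ε (-(ξ (ε t)) * ε t - κ * ∫ s in (0:ℝ)..t, ε s) t

noncomputable def lyapunov (a κ : ℝ) (ε : ℝ → ℝ) (t : ℝ) : ℝ :=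
  ε t ^ 2 + κ * (∫ s in (0:ℝ)..t, ε s) ^ 2 + 2 * a * ∫ s in (0:ℝ)..t, ε s ^ 2

namespace SolvesAZTND

variable {ξ : ℝ → ℝ} {κ a : ℝ} {ε : ℝ → ℝ}

theorem continuousOn (hε : SolvesAZTND ξ κ ε) : ContinuousOn ε (Ici 0) :=
  fun t ht => (hε t ht).continuousAt.continuousWithinAt

theorem hasDerivWithinAt_lyapunov (hε : SolvesAZTND ξ κ ε) {t : ℝ} (ht : 0 ≤ t) :
    HasDerivWithinAt (lyapunov a κ ε) (2 * (a - ξ (ε t)) * ε t ^ 2) (Ici 0) t := by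
  have hy := hasDerivWithinAt_integral_Ici hε.continuousOn ht
  have hF := hasDerivWithinAt_integral_Ici (f := fun s => ε s ^ 2) (hε.continuousOn.pow 2) ht
  refine ((((hε t ht).hasDerivWithinAt.pow 2).add ((hy.pow 2).const_mul κ)).add
    (hF.const_mul (2 * a))).congr_deriv ?_
  norm_num
  ring

theorem lyapunov_le (hε : SolvesAZTND ξ κ ε) (hξa : ∀ x, a ≤ ξ x) {t : ℝ} (ht : 0 ≤ t) :
    lyapunov a κ ε t ≤ ε 0 ^ 2 := by
  have hanti : AntitoneOn (lyapunov a κ ε) (Ici 0) := by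
    refine antitoneOn_of_hasDerivWithinAt_nonpos (convex_Ici 0)
      (fun t ht => (hε.hasDerivWithinAt_lyapunov ht).continuousWithinAt)
      (fun t ht => (hε.hasDerivWithinAt_lyapunov (interior_subset ht)).mono interior_subset)
      (fun t _ => ?_)
    nlinarith [hξa (ε t), sq_nonneg (ε t)]
  simpa [lyapunov] using hanti self_mem_Ici ht ht

theorem abs_le_abs_zero (hε : SolvesAZTND ξ κ ε) (hξa : ∀ x, a ≤ ξ x) (ha : 0 ≤ a) (hκ : 0 ≤ κ)
    {t : ℝ} (ht : 0 ≤ t) : |ε t| ≤ |ε 0| := by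
  have hV := hε.lyapunov_le hξa ht
  have hF : 0 ≤ ∫ s in (0:ℝ)..t, ε s ^ 2 := integral_nonneg ht fun _ _ => sq_nonneg _
  rw [lyapunov] at hV
  exact sq_le_sq.1 (by nlinarith [mul_nonneg hκ (sq_nonneg (∫ s in (0:ℝ)..t, ε s))])

theorem abs_mul_integral_le (hε : SolvesAZTND ξ κ ε) (hξa : ∀ x, a ≤ ξ x) (ha : 0 ≤ a)
    (hκ : 0 ≤ κ) {t : ℝ} (ht : 0 ≤ t) :
    |κ * ∫ s in (0:ℝ)..t, ε s| ≤ √(κ * ε 0 ^ 2) := by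
  have hV := hε.lyapunov_le hξa ht
  have hF : 0 ≤ ∫ s in (0:ℝ)..t, ε s ^ 2 := integral_nonneg ht fun _ _ => sq_nonneg _
  rw [lyapunov] at hV
  have hy : κ * (∫ s in (0:ℝ)..t, ε s) ^ 2 ≤ ε 0 ^ 2 := by nlinarith [sq_nonneg (ε t)]
  refine Real.abs_le_sqrt ?_
  calc (κ * ∫ s in (0:ℝ)..t, ε s) ^ 2 = κ * (κ * (∫ s in (0:ℝ)..t, ε s) ^ 2) := by ring
    _ ≤ κ * ε 0 ^ 2 := mul_le_mul_of_nonneg_left hy hκ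

theorem lipschitzOnWith (hε : SolvesAZTND ξ κ ε) (hξc : Continuous ξ) (hξa : ∀ x, a ≤ ξ x)
    (ha : 0 ≤ a) (hκ : 0 ≤ κ) : ∃ K, LipschitzOnWith K ε (Ici 0) := by
  obtain ⟨B, hB⟩ := (isCompact_Icc (a := -|ε 0|) (b := |ε 0|)).exists_bound_of_continuousOn
    hξc.continuousOn
  have hB0 : 0 ≤ B := (norm_nonneg _).trans (hB 0 ⟨by simp, abs_nonneg _⟩)
  refine ⟨(B * |ε 0| + √(κ * ε 0 ^ 2)).toNNReal,
    (convex_Ici 0).lipschitzOnWith_of_nnnorm_hasDerivWithin_le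
      (fun t ht => (hε t ht).hasDerivWithinAt) fun t ht => ?_⟩
  have hεt := hε.abs_le_abs_zero hξa ha hκ ht
  have hξt : |ξ (ε t)| ≤ B := hB (ε t) (abs_le.1 hεt)
  rw [Real.le_toNNReal_iff_coe_le (by positivity), coe_nnnorm, Real.norm_eq_abs]
  calc |-ξ (ε t) * ε t - κ * ∫ s in (0:ℝ)..t, ε s|
      ≤ |ξ (ε t)| * |ε t| + |κ * ∫ s in (0:ℝ)..t, ε s| := by
        rw [neg_mul, ← abs_mul]; exact (abs_sub _ _).trans (by rw [abs_neg])
    _ ≤ B * |ε 0| + √(κ * ε 0 ^ 2) := by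
        gcongr
        exact hε.abs_mul_integral_le hξa ha hκ ht

theorem integrableOn_sq (hε : SolvesAZTND ξ κ ε) (hξa : ∀ x, a ≤ ξ x) (ha : 0 < a)
    (hκ : 0 ≤ κ) : IntegrableOn (fun t => ε t ^ 2) (Ioi 0) := by
  refine integrableOn_Ioi_of_intervalIntegral_norm_bounded (ε 0 ^ 2 / (2 * a)) 0
    (fun t => ((hε.continuousOn.pow 2).mono Icc_subset_Ici_self).integrableOn_Icc.mono_set
      Ioc_subset_Icc_self) tendsto_id ?_
  filter_upwards [eventually_ge_atTop 0] with t ht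
  have hV := hε.lyapunov_le hξa ht
  rw [lyapunov] at hV
  simp only [id, norm_pow, Real.norm_eq_abs, sq_abs]
  rw [le_div_iff₀ (by positivity)]
  nlinarith [sq_nonneg (ε t), mul_nonneg hκ (sq_nonneg (∫ s in (0:ℝ)..t, ε s))]

end SolvesAZTND

/-- **Theorem 1 (AZTND global convergence, scalar subsystem, constant feedback
coefficient).** If `ξ : ℝ → ℝ` is continuous and bounded below by a constant
`a > 0`, `κ > 0`, and `ε : ℝ → ℝ` is differentiable on `[0, ∞)` satisfying
`ε'(t) = -ξ(ε(t))·ε(t) - κ·∫₀ᵗ ε(s) ds` for all `t ≥ 0`, then `ε(t) → 0`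
as `t → ∞`. -/
theorem aztnd_global_convergence_scalar
    (a : ℝ) (ha : 0 < a)
    (ξ : ℝ → ℝ) (hξc : Continuous ξ) (hξa : ∀ x : ℝ, a ≤ ξ x)
    (κ : ℝ) (hκ : 0 < κ)
    (ε : ℝ → ℝ)
    (hdyn : ∀ t : ℝ, 0 ≤ t →
      HasDerivAt ε (-(ξ (ε t)) * ε t - κ * ∫ s in (0:ℝ)..t, ε s) t) :
    Tendsto ε atTop (nhds 0) := by
  have hε : SolvesAZTND ξ κ ε := hdyn
  obtain ⟨K, hK⟩ := hε.lipschitzOnWith hξc hξa ha.le hκ.le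
  exact tendsto_atTop_zero_of_lipschitzOnWith_of_integrableOn_sq hK
    (hε.integrableOn_sq hξa ha hκ.le)
end

section
/- Let ξ > 0 and κ > 0 be real constants and c ∈ ℝ. Suppose ε : ℝ → ℝ is differentiable on [0,∞), continuous, and satisfies the linear-noise-perturbed error dynamics ε'(t) = -ξ·ε(t) - κ·∫₀ᵗ ε(s) ds + c·t for all t ≥ 0. Then ε(t) tends to c/κ as t → ∞; in particular the steady-state residual error is bounded, with limiting magnitude |c|/κ. -/
/-!
With `b = ε - c/κ` and `v t = ∫₀ᵗ ε - (c/κ) t + ξ c/κ²` the dynamics become the unforced damped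
oscillator `b' = -ξ b - κ v`, `v' = b`. For small `δ > 0` the energy `b²/2 + κ v²/2 + δ v b`
dominates `b²/4` and satisfies `E' ≤ -δ E`, so by Grönwall it decays exponentially and `b → 0`.
-/

open Filter Real Set Topology

theorem le_mul_exp_of_hasDerivAt_le_neg_mul {f f' : ℝ → ℝ} {r : ℝ}
    (hf : ∀ t, 0 ≤ t → HasDerivAt f (f' t) t) (hbound : ∀ t, 0 ≤ t → f' t ≤ -r * f t)
    {t : ℝ} (ht : 0 ≤ t) : f t ≤ f 0 * exp (-r * t) := by
  have key := le_gronwallBound_of_liminf_deriv_right_le (δ := f 0) (K := -r) (ε := 0) (b := t)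
    (fun s hs => (hf s hs.1).continuousAt.continuousWithinAt)
    (fun s hs _ hr => ((hf s hs.1).hasDerivWithinAt).liminf_right_slope_le hr)
    le_rfl (fun s hs => by simpa using hbound s hs.1) t ⟨ht, le_rfl⟩
  simpa [gronwallBound_ε0] using key

noncomputable def dampedEnergy (κ δ x v : ℝ) : ℝ := x ^ 2 / 2 + κ * v ^ 2 / 2 + δ * v * x

theorem sq_div_four_le_dampedEnergy {κ δ : ℝ} (h : δ ^ 2 ≤ κ / 2) (x v : ℝ) :
    x ^ 2 / 4 ≤ dampedEnergy κ δ x v := by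
  unfold dampedEnergy
  nlinarith [sq_nonneg (x / 2 + δ * v), mul_nonneg (sub_nonneg.2 h) (sq_nonneg v)]

theorem dampedEnergy_flow_deriv_le {ξ κ δ : ℝ} (hδ : 0 ≤ δ) (hδξ : δ ≤ ξ / 2)
    (hδκ : δ * ξ ≤ κ / 2) (x v : ℝ) :
    x * (-ξ * x - κ * v) + κ * v * x + δ * (x * x + v * (-ξ * x - κ * v))
      ≤ -δ * dampedEnergy κ δ x v := by
  unfold dampedEnergy
  have hξ : 0 ≤ ξ - δ := by linarith
  nlinarith [mul_nonneg hξ (sq_nonneg (x + δ * v)),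
    mul_nonneg (by linarith : 0 ≤ ξ / 2 - δ) (sq_nonneg x),
    mul_nonneg (by nlinarith : 0 ≤ δ * (κ - ξ * δ + δ ^ 2)) (sq_nonneg v)]

theorem tendsto_zero_of_damped_oscillator {ξ κ : ℝ} (hξ : 0 < ξ) (hκ : 0 < κ) {x v : ℝ → ℝ}
    (hv : ∀ t, 0 ≤ t → HasDerivAt v (x t) t)
    (hx : ∀ t, 0 ≤ t → HasDerivAt x (-ξ * x t - κ * v t) t) :
    Tendsto x atTop (𝓝 0) := by
  set δ := min (ξ / 2) (κ / (2 * ξ))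
  have hδ : 0 < δ := lt_min (by positivity) (by positivity)
  have hδξ : δ ≤ ξ / 2 := min_le_left _ _
  have hδκ : δ * ξ ≤ κ / 2 := by
    linarith [(le_div_iff₀ (by positivity)).1 (min_le_right (ξ / 2) (κ / (2 * ξ)))]
  have hδsq : δ ^ 2 ≤ κ / 2 := by nlinarith
  set E := fun t => dampedEnergy κ δ (x t) (v t)
  have hE : ∀ t, 0 ≤ t → HasDerivAt E
      (x t * (-ξ * x t - κ * v t) + κ * v t * x t
        + δ * (x t * x t + v t * (-ξ * x t - κ * v t))) t :=
    fun t ht => (((((hx t ht).fun_pow 2).div_const 2).add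
      ((((hv t ht).fun_pow 2).const_mul κ).div_const 2)).add
      (((hv t ht).const_mul δ).mul (hx t ht))).congr_deriv (by push_cast; ring)
  have hdecay : ∀ t, 0 ≤ t → x t ^ 2 ≤ 4 * E 0 * exp (-δ * t) := fun t ht => by
    have := le_mul_exp_of_hasDerivAt_le_neg_mul hE
      (fun s _ => dampedEnergy_flow_deriv_le hδ.le hδξ hδκ (x s) (v s)) ht
    linarith [sq_div_four_le_dampedEnergy hδsq (x t) (v t)]
  have hexp : Tendsto (fun t => exp (-δ * t)) atTop (𝓝 0) :=
    tendsto_exp_atBot.comp (tendsto_id.const_mul_atTop_of_neg (neg_neg_of_pos hδ))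
  have hsq : Tendsto (fun t => x t ^ 2) atTop (𝓝 0) := by
    refine tendsto_of_tendsto_of_tendsto_of_le_of_le' tendsto_const_nhds ?_
      (Eventually.of_forall fun t => sq_nonneg (x t)) (eventually_ge_atTop 0 |>.mono hdecay)
    simpa using hexp.const_mul (4 * E 0)
  simpa [tendsto_zero_iff_abs_tendsto_zero, Function.comp_def, sqrt_sq_eq_abs] using hsq.sqrt

/-- **Linear-noise steady-state error**: for constant coefficients `ξ > 0`,
`κ > 0` and linear noise `ϑ(t) = c·t`, any solution of the perturbed error
dynamics `ε'(t) = -ξ·ε(t) - κ·∫₀ᵗ ε(s) ds + c·t` on `[0, ∞)` converges to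
`c/κ`; in particular the steady-state residual error is tightly bounded, with
limiting magnitude `|c|/κ`. -/
theorem aztnd_linear_noise_bounded_error
    (ξ κ c : ℝ) (hξ : 0 < ξ) (hκ : 0 < κ)
    (ε : ℝ → ℝ) (hεc : Continuous ε)
    (hdyn : ∀ t : ℝ, 0 ≤ t →
      HasDerivAt ε (-ξ * ε t - κ * (∫ s in (0:ℝ)..t, ε s) + c * t) t) :
    Tendsto ε atTop (nhds (c / κ)) ∧
      Tendsto (fun t : ℝ => |ε t|) atTop (nhds (|c| / κ)) := by
  have hint : ∀ t, HasDerivAt (fun t => ∫ s in (0:ℝ)..t, ε s) (ε t) t := fun t =>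
    intervalIntegral.integral_hasDerivAt_right (hεc.intervalIntegrable 0 t)
      hεc.stronglyMeasurable.stronglyMeasurableAtFilter hεc.continuousAt
  set v := fun t => (∫ s in (0:ℝ)..t, ε s) - c / κ * t + ξ * c / κ ^ 2
  have hlim : Tendsto (fun t => ε t - c / κ) atTop (𝓝 0) := by
    refine tendsto_zero_of_damped_oscillator hξ hκ (v := v) (fun t _ => ?_) (fun t ht => ?_)
    · exact (((hint t).sub ((hasDerivAt_id t).const_mul (c / κ))).add_const _).congr_deriv
        (by simp)
    · exact ((hdyn t ht).sub_const (c / κ)).congr_deriv (by simp only [v]; field_simp; ring)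
  have hε : Tendsto ε atTop (𝓝 (c / κ)) := by simpa using hlim.add_const (c / κ)
  exact ⟨hε, by simpa [abs_div, abs_of_pos hκ] using hε.abs⟩
end
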